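/- A signed graph Σ = (G, σ) whose underlying simple graph G is connected and bipartite is distance-compatible if and only if it is balanced. -/

import Mathlib

open SimpleGraph

/-- The sign (product of edge signs) of a walk in a graph, computed along its darts. -/
def walkSign {V : Type*} {G : SimpleGraph V} (σ : V → V → ℤ) {u v : V} (p : G.Walk u v) : ℤ :=
  (p.darts.map fun d => σ d.toProd.1 d.toProd.2).prod

/-- `σ` is a signature on `G`: a symmetric function that is `±1`-valued on edges. -/
def IsSignature {V : Type*} (G : SimpleGraph V) (σ : V → V → ℤ) : Prop :=
  (∀ u v, σ u v = σ v u) ∧ ∀ u v, G.Adj u v → σ u v = 1 ∨ σ u v = -1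

/-- A signed graph is balanced when every cycle has sign `+1`. -/
def IsBalanced {V : Type*} (G : SimpleGraph V) (σ : V → V → ℤ) : Prop :=
  ∀ (u : V) (p : G.Walk u u), p.IsCycle → walkSign σ p = 1

/-- A walk is a shortest path when it is a path whose length is the graph distance
between its endpoints. -/
def IsShortestPath {V : Type*} {G : SimpleGraph V} {u v : V} (p : G.Walk u v) : Prop :=
  p.IsPath ∧ p.length = G.dist u v

open scoped Classical in
/-- `σmax u v = +1` if some shortest `u v`-path is positive, `-1` otherwise. -/
noncomputable def sigmaMax {V : Type*} (G : SimpleGraph V) (σ : V → V → ℤ) (u v : V) : ℤ :=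
  if ∃ p : G.Walk u v, IsShortestPath p ∧ walkSign σ p = 1 then 1 else -1

open scoped Classical in
/-- `σmin u v = +1` if all shortest `u v`-paths are positive, `-1` otherwise. -/
noncomputable def sigmaMin {V : Type*} (G : SimpleGraph V) (σ : V → V → ℤ) (u v : V) : ℤ :=
  if ∀ p : G.Walk u v, IsShortestPath p → walkSign σ p = 1 then 1 else -1

/-- The signed distance matrix `D^max`, with `(u,v)` entry `σmax(u,v)·d(u,v)`. -/
noncomputable def Dmax {V : Type*} (G : SimpleGraph V) (σ : V → V → ℤ) : Matrix V V ℝ :=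
  Matrix.of fun u v => (sigmaMax G σ u v : ℝ) * (G.dist u v : ℝ)

/-- The signed distance matrix `D^min`, with `(u,v)` entry `σmin(u,v)·d(u,v)`. -/
noncomputable def Dmin {V : Type*} (G : SimpleGraph V) (σ : V → V → ℤ) : Matrix V V ℝ :=
  Matrix.of fun u v => (sigmaMin G σ u v : ℝ) * (G.dist u v : ℝ)

/-- Two vertices are distance-compatible if all shortest paths between them have the
same sign. -/
def Compatible {V : Type*} (G : SimpleGraph V) (σ : V → V → ℤ) (u v : V) : Prop :=
  ∀ p q : G.Walk u v, IsShortestPath p → IsShortestPath q → walkSign σ p = walkSign σ q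

/-- A signed graph is distance-compatible if every pair of vertices is
distance-compatible. -/
def IsCompatibleGraph {V : Type*} (G : SimpleGraph V) (σ : V → V → ℤ) : Prop :=
  ∀ u v, Compatible G σ u v

/-- The largest eigenvalue of a (symmetric) real matrix: the supremum of the set of real
roots of its characteristic polynomial. -/
noncomputable def largestEigenvalue {n : Type*} [Fintype n] [DecidableEq n]
    (M : Matrix n n ℝ) : ℝ :=
  sSup {x : ℝ | M.charpoly.IsRoot x}

/-!
If the signed graph is balanced, every closed walk is positive: bypassing a walk only removes
closed walks consisting of an edge followed by a path, and each of these is a cycle or an edge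
traversed back and forth. Hence any two walks with the same ends have the same sign.

Conversely, fix a root `r` and let `μ v` be the common sign of the shortest `r`–`v` paths. In a
bipartite graph the distances from `r` of two adjacent vertices differ by exactly one, so a
shortest path to the nearer end, extended by the edge, is a shortest path to the farther end.
Compatibility then gives `σ u v = μ u * μ v` on every edge, and every closed walk at `u` has sign
`μ u ^ 2 = 1`.
-/

section

variable {V : Type*} {G : SimpleGraph V} {σ : V → V → ℤ} {r u v w : V}

@[simp]
lemma walkSign_nil : walkSign σ (Walk.nil : G.Walk u u) = 1 := rfl

@[simp]
lemma walkSign_cons (h : G.Adj u v) (p : G.Walk v w) :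
    walkSign σ (p.cons h) = σ u v * walkSign σ p := by
  simp [walkSign]

lemma walkSign_append (p : G.Walk u v) (q : G.Walk v w) :
    walkSign σ (p.append q) = walkSign σ p * walkSign σ q := by
  simp [walkSign]

lemma walkSign_concat (p : G.Walk u v) (h : G.Adj v w) :
    walkSign σ (p.concat h) = walkSign σ p * σ v w := by
  simp [Walk.concat_eq_append, walkSign_append]

lemma walkSign_reverse (hsymm : ∀ u v, σ u v = σ v u) (p : G.Walk u v) :
    walkSign σ p.reverse = walkSign σ p := by
  induction p with
  | nil => rfl
  | cons h p ih =>
    rw [Walk.reverse_cons, walkSign_append, ih, walkSign_cons, walkSign_cons, walkSign_nil,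
      mul_one, hsymm, mul_comm]

lemma walkSign_mul_self (hsign : ∀ u v, G.Adj u v → σ u v = 1 ∨ σ u v = -1)
    (p : G.Walk u v) : walkSign σ p * walkSign σ p = 1 := by
  induction p with
  | nil => rfl
  | cons h p ih =>
    rw [walkSign_cons, mul_mul_mul_comm, ih, mul_one]
    rcases hsign _ _ h with h | h <;> simp [h]

lemma walkSign_eq_mul_of_adj {μ : V → ℤ} (hμ : ∀ v, μ v * μ v = 1)
    (hσμ : ∀ u v, G.Adj u v → σ u v = μ u * μ v) (p : G.Walk u v) :
    walkSign σ p = μ u * μ v := by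
  induction p with
  | nil => exact (hμ _).symm
  | @cons u w v h p ih =>
    rw [walkSign_cons, hσμ _ _ h, ih, mul_assoc, ← mul_assoc (μ w), hμ, one_mul]

lemma IsBalanced.of_adj_eq_mul {μ : V → ℤ} (hμ : ∀ v, μ v * μ v = 1)
    (hσμ : ∀ u v, G.Adj u v → σ u v = μ u * μ v) : IsBalanced G σ := fun u p _ => by
  rw [walkSign_eq_mul_of_adj hμ hσμ p, hμ]

lemma IsBalanced.walkSign_cons_eq_one_of_isPath (hσ : IsSignature G σ) (hbal : IsBalanced G σ)
    (h : G.Adj u v) {p : G.Walk v u} (hp : p.IsPath) : walkSign σ (p.cons h) = 1 := by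
  by_cases he : s(u, v) ∈ p.edges
  · rw [hp.eq_adj_toWalk_of_mem_edges (Sym2.eq_swap ▸ he)]
    simp only [Adj.toWalk, walkSign_cons, walkSign_nil, mul_one, hσ.1 v u]
    rcases hσ.2 u v h with h | h <;> simp [h]
  · exact hbal u _ ((Walk.cons_isCycle_iff p h).2 ⟨hp, he⟩)

lemma IsBalanced.walkSign_bypass [DecidableEq V] (hσ : IsSignature G σ)
    (hbal : IsBalanced G σ) (p : G.Walk u v) : walkSign σ p.bypass = walkSign σ p := by
  induction p with
  | nil => rfl
  | @cons u w v h p ih =>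
    rw [Walk.bypass, walkSign_cons, ← ih]
    split_ifs with hs
    · have hsplit := congrArg (walkSign σ) (p.bypass.take_spec hs)
      have hloop := hbal.walkSign_cons_eq_one_of_isPath hσ h (p.bypass_isPath.takeUntil hs)
      rw [walkSign_append] at hsplit
      rw [walkSign_cons] at hloop
      rw [← hsplit, ← mul_assoc, hloop, one_mul]
    · rw [walkSign_cons]

lemma IsBalanced.walkSign_eq_one_of_closed (hσ : IsSignature G σ) (hbal : IsBalanced G σ)
    (p : G.Walk u u) : walkSign σ p = 1 := by
  classical
  have hnil : p.bypass = .nil := Walk.eq_nil_iff_nil.2 (Walk.isPath_iff_nil.1 p.bypass_isPath)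
  rw [← hbal.walkSign_bypass hσ, hnil, walkSign_nil]

lemma IsBalanced.walkSign_eq (hσ : IsSignature G σ) (hbal : IsBalanced G σ)
    (p q : G.Walk u v) : walkSign σ p = walkSign σ q := by
  have hloop := hbal.walkSign_eq_one_of_closed hσ (p.append q.reverse)
  rw [walkSign_append, walkSign_reverse hσ.1] at hloop
  calc walkSign σ p = walkSign σ p * (walkSign σ q * walkSign σ q) := by
        rw [walkSign_mul_self hσ.2, mul_one]
    _ = walkSign σ q := by rw [← mul_assoc, hloop, one_mul]

lemma IsBalanced.isCompatibleGraph (hσ : IsSignature G σ) (hbal : IsBalanced G σ) :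
    IsCompatibleGraph G σ := fun _ _ p q _ _ => hbal.walkSign_eq hσ p q

lemma SimpleGraph.Colorable.dist_ne_of_adj (hbip : G.Colorable 2) (hr : G.Reachable r u)
    (h : G.Adj u v) : G.dist r u ≠ G.dist r v := by
  intro heq
  obtain ⟨p, hp⟩ := hr.exists_walk_length_eq_dist
  obtain ⟨q, hq⟩ := (hr.trans h.reachable).exists_walk_length_eq_dist
  have heven := two_colorable_iff_forall_loop_even.1 hbip r (p.append (q.reverse.cons h))
  rw [Walk.length_append, Walk.length_cons, Walk.length_reverse, hp, hq, heq] at heven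
  exact Nat.not_even_iff_odd.2 ⟨G.dist r v, by ring⟩ heven

lemma Compatible.adj_eq_mul_of_dist_eq_add_one
    (hsign : ∀ u v, G.Adj u v → σ u v = 1 ∨ σ u v = -1) (hcomp : Compatible G σ r v)
    {p : G.Walk r u} {q : G.Walk r v} (hp : IsShortestPath p) (hq : IsShortestPath q)
    (h : G.Adj u v) (hd : G.dist r v = G.dist r u + 1) :
    σ u v = walkSign σ p * walkSign σ q := by
  have hlen : (p.concat h).length = G.dist r v := by rw [Walk.length_concat, hp.2, hd]
  have hpq := hcomp _ q ⟨Walk.isPath_of_length_eq_dist _ hlen, hlen⟩ hq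
  rw [walkSign_concat] at hpq
  rw [← hpq, ← mul_assoc, walkSign_mul_self hsign, one_mul]

lemma IsCompatibleGraph.isBalanced (hσ : IsSignature G σ) (hG : G.Connected)
    (hbip : G.Colorable 2) (hcomp : IsCompatibleGraph G σ) : IsBalanced G σ := by
  obtain ⟨r⟩ := hG.nonempty
  have hshortest (v : V) : ∃ p : G.Walk r v, IsShortestPath p := by
    obtain ⟨p, hp⟩ := (hG r v).exists_walk_length_eq_dist
    exact ⟨p, Walk.isPath_of_length_eq_dist p hp, hp⟩
  choose P hP using hshortest
  refine IsBalanced.of_adj_eq_mul (μ := fun v => walkSign σ (P v))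
    (fun v => walkSign_mul_self hσ.2 _) fun u v h => ?_
  have hne := hbip.dist_ne_of_adj (hG r u) h
  rcases h.diff_dist_adj (u := r) with hd | hd | hd
  · exact absurd hd.symm hne
  · exact (hcomp r v).adj_eq_mul_of_dist_eq_add_one hσ.2 (hP u) (hP v) h hd
  · rw [hσ.1, mul_comm]
    exact (hcomp r u).adj_eq_mul_of_dist_eq_add_one hσ.2 (hP v) (hP u) h.symm (by omega)

end

/-- A signed graph whose underlying simple graph is connected and
bipartite is distance-compatible if and only if it is balanced. -/
theorem bipartite_compatible_iff_balanced {V : Type*} (G : SimpleGraph V)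
    (σ : V → V → ℤ) (hσ : IsSignature G σ) (hG : G.Connected)
    (hbip : G.Colorable 2) :
    IsCompatibleGraph G σ ↔ IsBalanced G σ :=
  ⟨fun hcomp => hcomp.isBalanced hσ hG hbip, fun hbal => hbal.isCompatibleGraph hσ⟩
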